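/- arXiv:1106.0088 — 8 statements merged into one kernel-verified Lean document; each statement's English description precedes it below -/
import Mathlib

section
/- Let X be a finite-dimensional real normed space, let F ⊆ X be a closed, bounded, convex set with 0 in its interior, and let Ω, Ω_1, …, Ω_n (n ≥ 2) be nonempty closed subsets of X. If at least one of the sets Ω, Ω_1, …, Ω_n is bounded, then the generalized Heron problem admits an optimal solution, i.e., there exists x̄ ∈ Ω such that Σ_{i=1}^n T^F_{Ω_i}(x̄) ≤ Σ_{i=1}^n T^F_{Ω_i}(x) for all x ∈ Ω. -/
open Set Metric Bornology Pointwise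

/-- The minimal time function `T^F_Q(x) = inf {t ≥ 0 : Q ∩ (x + tF) ≠ ∅}`. -/
noncomputable def minTime {X : Type*} [NormedAddCommGroup X] [NormedSpace ℝ X]
    (F Q : Set X) (x : X) : ℝ :=
  sInf {t : ℝ | 0 ≤ t ∧ (Q ∩ ({x} + t • F)).Nonempty}

/-!
If a closed ball `closedBall 0 r` lies in the convex set `F`, then `x ↦ T^F_Q(x)` is
`r⁻¹`-Lipschitz, so the Heron objective `T` is continuous. If `Ω` is bounded it is compact
(`X` is finite-dimensional) and `T` attains its minimum on it. If some `Ω_i` is bounded, then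
`T ≥ T^F_{Ω_i}` grows at least like `‖x‖ / R` where `F ⊆ closedBall 0 R`, so `T` tends to
infinity along the cocompact filter and again attains its minimum on the closed set `Ω`.
-/

open Filter Topology

lemma mem_singleton_add_iff {G : Type*} [AddCommGroup G] {x y : G} {s : Set G} :
    y ∈ {x} + s ↔ y - x ∈ s := by
  simp [singleton_add, sub_eq_neg_add]

section MinTime

variable {X : Type*} [NormedAddCommGroup X] [NormedSpace ℝ X] {F Q : Set X}

lemma minTime_nonneg (x : X) : 0 ≤ minTime F Q x :=
  Real.sInf_nonneg fun _ ht => ht.1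

lemma minTime_le {x q : X} {t : ℝ} (ht : 0 ≤ t) (hq : q ∈ Q) (hqx : q - x ∈ t • F) :
    minTime F Q x ≤ t :=
  csInf_le ⟨0, fun _ hs => hs.1⟩ ⟨ht, q, hq, mem_singleton_add_iff.2 hqx⟩

variable {r : ℝ}

lemma mem_smul_of_norm_le_mul (hr : 0 ≤ r) (hrF : closedBall 0 r ⊆ F) {v : X} {t : ℝ}
    (ht : 0 ≤ t) (hv : ‖v‖ ≤ t * r) : v ∈ t • F := by
  refine smul_set_mono hrF ?_
  rw [smul_closedBall t 0 hr, smul_zero, Real.norm_of_nonneg ht]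
  simpa using hv

lemma minTime_set_nonempty (hr : 0 < r) (hrF : closedBall 0 r ⊆ F) (hQ : Q.Nonempty) (x : X) :
    {t : ℝ | 0 ≤ t ∧ (Q ∩ ({x} + t • F)).Nonempty}.Nonempty := by
  obtain ⟨q, hq⟩ := hQ
  have ht : 0 ≤ ‖q - x‖ / r := by positivity
  exact ⟨_, ht, q, hq, mem_singleton_add_iff.2 <|
    mem_smul_of_norm_le_mul hr.le hrF ht (div_mul_cancel₀ _ hr.ne').ge⟩

lemma minTime_le_minTime_add (hFconv : Convex ℝ F) (hr : 0 < r) (hrF : closedBall 0 r ⊆ F)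
    (hQ : Q.Nonempty) (x y : X) :
    minTime F Q x ≤ minTime F Q y + r⁻¹ * dist x y := by
  have hs : 0 ≤ r⁻¹ * dist x y := by positivity
  have hyx : y - x ∈ (r⁻¹ * dist x y) • F := by
    refine mem_smul_of_norm_le_mul hr.le hrF hs ?_
    rw [← dist_eq_norm, dist_comm, mul_right_comm, inv_mul_cancel₀ hr.ne', one_mul]
  -- by convexity `(t + s) • F = t • F + s • F`: what `y` reaches in time `t`, `x` reaches in `t + s`
  have key : ∀ t ∈ {t : ℝ | 0 ≤ t ∧ (Q ∩ ({y} + t • F)).Nonempty},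
      minTime F Q x - r⁻¹ * dist x y ≤ t := by
    rintro t ⟨ht, q, hq, hqy⟩
    rw [sub_le_iff_le_add]
    refine minTime_le (add_nonneg ht hs) hq ?_
    rw [hFconv.add_smul ht hs, ← sub_add_sub_cancel q y x]
    exact add_mem_add (mem_singleton_add_iff.1 hqy) hyx
  exact sub_le_iff_le_add.1 (le_csInf (minTime_set_nonempty hr hrF hQ y) key)

lemma lipschitzWith_minTime (hFconv : Convex ℝ F) (hr : 0 < r) (hrF : closedBall 0 r ⊆ F)
    (hQ : Q.Nonempty) : LipschitzWith (Real.toNNReal r⁻¹) (minTime F Q) :=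
  LipschitzWith.of_le_add_mul' _ (minTime_le_minTime_add hFconv hr hrF hQ)

lemma div_le_minTime (hr : 0 < r) (hrF : closedBall 0 r ⊆ F) (hQ : Q.Nonempty) {R M : ℝ}
    (hR : 0 < R) (hFR : F ⊆ closedBall 0 R) (hQM : Q ⊆ closedBall 0 M) (x : X) :
    (‖x‖ - M) / R ≤ minTime F Q x := by
  refine le_csInf (minTime_set_nonempty hr hrF hQ x) ?_
  rintro t ⟨ht, q, hq, hqx⟩
  obtain ⟨f, hf, hfqx⟩ := mem_singleton_add_iff.1 hqx
  have hfR : ‖f‖ ≤ R := by simpa using hFR hf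
  have hqM : ‖q‖ ≤ M := by simpa using hQM hq
  have hqx_norm : ‖q - x‖ = t * ‖f‖ := by
    rw [← hfqx, norm_smul, Real.norm_of_nonneg ht]
  have hx : ‖x‖ ≤ ‖q‖ + ‖q - x‖ := by simpa using norm_sub_le q (q - x)
  rw [div_le_iff₀ hR]
  nlinarith

lemma tendsto_minTime_cocompact [ProperSpace X] (hr : 0 < r) (hrF : closedBall 0 r ⊆ F)
    (hFb : IsBounded F) (hQ : Q.Nonempty) (hQb : IsBounded Q) :
    Tendsto (minTime F Q) (cocompact X) atTop := by
  obtain ⟨R, hR, hFR⟩ := hFb.subset_closedBall_lt 0 0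
  obtain ⟨M, hQM⟩ := hQb.subset_closedBall 0
  refine tendsto_atTop_mono (div_le_minTime hr hrF hQ hR hFR hQM) ?_
  exact (tendsto_atTop_add_const_right _ (-M) tendsto_norm_cocompact_atTop).atTop_div_const hR

end MinTime

theorem heron_exists_of_finiteDimensional_general
    {X : Type*} [NormedAddCommGroup X] [NormedSpace ℝ X] [FiniteDimensional ℝ X]
    (F : Set X) (hFb : IsBounded F) (hFconv : Convex ℝ F)
    (hF0 : (0 : X) ∈ interior F)
    (n : ℕ)
    (Ω : Set X) (hΩne : Ω.Nonempty) (hΩc : IsClosed Ω)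
    (Ωi : Fin n → Set X) (hΩine : ∀ i, (Ωi i).Nonempty)
    (hbdd : IsBounded Ω ∨ ∃ i, IsBounded (Ωi i)) :
    ∃ xbar ∈ Ω, ∀ x ∈ Ω, ∑ i, minTime F (Ωi i) xbar ≤ ∑ i, minTime F (Ωi i) x := by
  obtain ⟨r, hr, hrF⟩ := nhds_basis_closedBall.mem_iff.1 (mem_interior_iff_mem_nhds.1 hF0)
  set T : X → ℝ := fun x => ∑ i, minTime F (Ωi i) x
  have hT : Continuous T :=
    continuous_finsetSum _ fun i _ => (lipschitzWith_minTime hFconv hr hrF (hΩine i)).continuous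
  suffices ∃ xbar ∈ Ω, IsMinOn T Ω xbar from this
  rcases hbdd with hΩb | ⟨i, hib⟩
  · exact (isCompact_of_isClosed_isBounded hΩc hΩb).exists_isMinOn hΩne hT.continuousOn
  · have hTi : Tendsto T (cocompact X) atTop :=
      tendsto_atTop_mono (fun x => Finset.single_le_sum (fun j _ => minTime_nonneg x)
        (Finset.mem_univ i)) (tendsto_minTime_cocompact hr hrF hFb (hΩine i) hib)
    obtain ⟨x₀, hx₀⟩ := hΩne
    exact hT.continuousOn.exists_isMinOn' hΩc hx₀
      ((hTi.eventually_ge_atTop (T x₀)).filter_mono inf_le_left)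

/-- Existence of optimal solutions to the generalized Heron problem in a
finite-dimensional normed space when one of the sets `Ω, Ω_1, …, Ω_n` is bounded. -/
theorem heron_exists_of_finiteDimensional
    {X : Type*} [NormedAddCommGroup X] [NormedSpace ℝ X] [FiniteDimensional ℝ X]
    (F : Set X) (hFc : IsClosed F) (hFb : IsBounded F) (hFconv : Convex ℝ F)
    (hF0 : (0 : X) ∈ interior F)
    (n : ℕ) (hn : 2 ≤ n)
    (Ω : Set X) (hΩne : Ω.Nonempty) (hΩc : IsClosed Ω)
    (Ωi : Fin n → Set X) (hΩine : ∀ i, (Ωi i).Nonempty) (hΩic : ∀ i, IsClosed (Ωi i))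
    (hbdd : IsBounded Ω ∨ ∃ i, IsBounded (Ωi i)) :
    ∃ xbar ∈ Ω, ∀ x ∈ Ω, ∑ i, minTime F (Ωi i) xbar ≤ ∑ i, minTime F (Ωi i) x :=
  heron_exists_of_finiteDimensional_general F hFb hFconv hF0 n Ω hΩne hΩc Ωi hΩine hbdd
end

section
/- Let X be a real Hilbert space and let Ω, Ω_1, …, Ω_n (n ≥ 2) be nonempty closed subsets of X. Let x̄ ∈ Ω be a local optimal solution of the distance version of the generalized Heron problem, and suppose that x̄ ∉ Ω_i and Π(x̄;Ω_i) ≠ ∅ for every i = 1, …, n. Then for every choice of projections ω_i ∈ Π(x̄;Ω_i), i = 1, …, n, one has −Σ_{i=1}^n (x̄ − ω_i)/d(x̄;Ω_i) ∈ N̂(x̄;Ω). -/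
open Set Metric
open scoped RealInnerProductSpace

/-- The Fréchet (regular) normal cone to `Ω` at `x̄ ∈ Ω`:
`v ∈ N̂(x̄;Ω)` iff for every `ε > 0` there is `δ > 0` such that
`⟨v, x − x̄⟩ ≤ ε‖x − x̄‖` for all `x ∈ Ω` with `‖x − x̄‖ < δ`. -/
def frechetNormalCone {X : Type*} [NormedAddCommGroup X] [InnerProductSpace ℝ X]
    (Ω : Set X) (xbar : X) : Set X :=
  {v | ∀ ε > (0 : ℝ), ∃ δ > (0 : ℝ), ∀ x ∈ Ω, ‖x - xbar‖ < δ →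
    ⟪v, x - xbar⟫ ≤ ε * ‖x - xbar‖}

/-- The set of metric projections of `x` onto `Q`. -/
def projSet {X : Type*} [NormedAddCommGroup X] (Q : Set X) (x : X) : Set X :=
  {ω ∈ Q | ‖x - ω‖ = infDist x Q}

/-! Each `d(·;Ωᵢ)` is majorised near `x̄` by `‖· − ωᵢ‖`, which in a Hilbert space lies below the
quadratic `d(x̄;Ωᵢ) + ⟪(x̄ − ωᵢ)/d(x̄;Ωᵢ), x − x̄⟫ + ‖x − x̄‖²/(2 d(x̄;Ωᵢ))`. Summing and using local
optimality shows that the vector in question is a proximal normal to `Ω` at `x̄`, and proximal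
normals are Fréchet normals. -/

section InnerProductSpace

variable {X : Type*} [NormedAddCommGroup X] [InnerProductSpace ℝ X]

theorem norm_add_le_norm_add_inner_add_sq {a : X} (ha : a ≠ 0) (h : X) :
    ‖a + h‖ ≤ ‖a‖ + ⟪‖a‖⁻¹ • a, h⟫ + (2 * ‖a‖)⁻¹ * ‖h‖ ^ 2 := by
  have ha' : 0 < ‖a‖ := norm_pos_iff.2 ha
  -- AM-GM: `2 ‖a + h‖ ‖a‖ ≤ ‖a + h‖² + ‖a‖²`
  have hamgm : 2 * ‖a + h‖ * ‖a‖ ≤ 2 * ‖a‖ ^ 2 + 2 * ⟪a, h⟫ + ‖h‖ ^ 2 := by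
    nlinarith [two_mul_le_add_sq ‖a + h‖ ‖a‖, norm_add_sq_real a h]
  rw [real_inner_smul_left]
  field_simp
  linarith

theorem mem_frechetNormalCone_of_inner_le_mul_sq {Ω : Set X} {xbar v : X} {δ C : ℝ}
    (hδ : 0 < δ) (hv : ∀ x ∈ Ω, ‖x - xbar‖ < δ → ⟪v, x - xbar⟫ ≤ C * ‖x - xbar‖ ^ 2) :
    v ∈ frechetNormalCone Ω xbar := by
  intro ε hε
  have hC : 0 < |C| + 1 := by positivity
  refine ⟨min δ (ε / (|C| + 1)), lt_min hδ (div_pos hε hC), fun x hx hxδ => ?_⟩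
  have hsmall : (|C| + 1) * ‖x - xbar‖ ≤ ε := by
    have := (lt_min_iff.1 hxδ).2
    rw [lt_div_iff₀ hC] at this
    linarith
  calc ⟪v, x - xbar⟫ ≤ C * ‖x - xbar‖ ^ 2 := hv x hx (lt_min_iff.1 hxδ).1
    _ ≤ (|C| + 1) * ‖x - xbar‖ * ‖x - xbar‖ := by
      nlinarith [le_abs_self C, sq_nonneg ‖x - xbar‖]
    _ ≤ ε * ‖x - xbar‖ := by gcongr

theorem infDist_le_add_inner_add_sq_of_mem_projSet {Q : Set X} {xbar ω : X}
    (hω : ω ∈ projSet Q xbar) (hxbar : xbar ∉ Q) (x : X) :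
    infDist x Q ≤ infDist xbar Q + ⟪(infDist xbar Q)⁻¹ • (xbar - ω), x - xbar⟫
      + (2 * infDist xbar Q)⁻¹ * ‖x - xbar‖ ^ 2 := by
  have hne : xbar - ω ≠ 0 := sub_ne_zero.2 fun h => hxbar (h ▸ hω.1)
  calc infDist x Q ≤ dist x ω := infDist_le_dist_of_mem hω.1
    _ = ‖(xbar - ω) + (x - xbar)‖ := by rw [dist_eq_norm]; congr 1; abel
    _ ≤ _ := norm_add_le_norm_add_inner_add_sq hne _
    _ = _ := by rw [hω.2]

end InnerProductSpace

theorem heron_necessary_hilbert_general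
    {X : Type*} [NormedAddCommGroup X] [InnerProductSpace ℝ X]
    (n : ℕ)
    (Ω : Set X)
    (Ωi : Fin n → Set X)
    (xbar : X)
    (hloc : ∃ δ > (0 : ℝ), ∀ x ∈ Ω, ‖x - xbar‖ < δ →
      ∑ i, infDist xbar (Ωi i) ≤ ∑ i, infDist x (Ωi i))
    (hout : ∀ i, xbar ∉ Ωi i)
    (ω : Fin n → X) (hω : ∀ i, ω i ∈ projSet (Ωi i) xbar) :
    -∑ i, (infDist xbar (Ωi i))⁻¹ • (xbar - ω i) ∈ frechetNormalCone Ω xbar := by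
  obtain ⟨δ, hδ, hmin⟩ := hloc
  refine mem_frechetNormalCone_of_inner_le_mul_sq (C := ∑ i, (2 * infDist xbar (Ωi i))⁻¹) hδ
    fun x hx hxδ => ?_
  have hquad := Finset.sum_le_sum fun i (_ : i ∈ Finset.univ) =>
    infDist_le_add_inner_add_sq_of_mem_projSet (hω i) (hout i) x
  simp only [Finset.sum_add_distrib, ← Finset.sum_mul] at hquad
  rw [inner_neg_left, sum_inner]
  linarith [hmin x hx hxδ]

/-- Necessary optimality condition for the generalized Heron problem in a Hilbert
space when the local solution `x̄` lies outside all the target sets: for any choice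
of projections `ωᵢ ∈ Π(x̄;Ωᵢ)` one has `−Σᵢ (x̄−ωᵢ)/d(x̄;Ωᵢ) ∈ N̂(x̄;Ω)`. -/
theorem heron_necessary_hilbert
    {X : Type*} [NormedAddCommGroup X] [InnerProductSpace ℝ X] [CompleteSpace X]
    (n : ℕ) (hn : 2 ≤ n)
    (Ω : Set X) (hΩne : Ω.Nonempty) (hΩc : IsClosed Ω)
    (Ωi : Fin n → Set X) (hΩine : ∀ i, (Ωi i).Nonempty) (hΩic : ∀ i, IsClosed (Ωi i))
    (xbar : X) (hxbar : xbar ∈ Ω)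
    (hloc : ∃ δ > (0 : ℝ), ∀ x ∈ Ω, ‖x - xbar‖ < δ →
      ∑ i, infDist xbar (Ωi i) ≤ ∑ i, infDist x (Ωi i))
    (hout : ∀ i, xbar ∉ Ωi i)
    (hproj : ∀ i, (projSet (Ωi i) xbar).Nonempty)
    (ω : Fin n → X) (hω : ∀ i, ω i ∈ projSet (Ωi i) xbar) :
    -∑ i, (infDist xbar (Ωi i))⁻¹ • (xbar - ω i) ∈ frechetNormalCone Ω xbar :=
  heron_necessary_hilbert_general n Ω Ωi xbar hloc hout ω hω
end

section
/- Let X be a real Hilbert space and let Ω_1, …, Ω_n (n ≥ 2) be nonempty closed subsets of X with ∩_{i=1}^n Ω_i = ∅. Let x̄ be a local optimal solution of the unconstrained problem: minimize Σ_{i=1}^n d(x;Ω_i) over x ∈ X, and assume that x̄ ∉ Ω_i and Π(x̄;Ω_i) ≠ ∅ for every i = 1, …, n. Then the projection set Π(x̄;Ω_i) is a singleton for every i = 1, …, n. -/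
open Set Metric
open scoped RealInnerProductSpace

/-!
Fix projections `ωᵢ ∈ Π(x̄;Ωᵢ)`. The smooth function `x ↦ Σᵢ ‖x - ωᵢ‖` majorizes `Σᵢ d(x;Ωᵢ)`
and agrees with it at `x̄`, so `x̄` is a local minimizer of it too and its gradient vanishes:
`Σᵢ (x̄ - ωᵢ)/‖x̄ - ωᵢ‖ = 0`. Replacing `ωⱼ` by another projection `ω'ⱼ` leaves the other
terms unchanged, so both points have the same unit direction from `x̄` and the same distance
`d(x̄;Ωⱼ) > 0` to it, hence coincide.
-/

theorem Fintype.apply_eq_of_sum_apply_update_eq {ι α M : Type*} [Fintype ι] [DecidableEq ι]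
    [AddCancelCommMonoid M] (f : α → M) (ω : ι → α) (j : ι) {a b : α}
    (h : ∑ i, f (Function.update ω j a i) = ∑ i, f (Function.update ω j b i)) : f a = f b := by
  simp only [← Function.comp_apply (f := f), Function.comp_update,
    Finset.sum_update_of_mem (Finset.mem_univ j)] at h
  exact add_right_cancel h

theorem isLocalMin_sum_norm_sub_of_mem_projSet {X ι : Type*} [NormedAddCommGroup X] [Fintype ι]
    {Ω : ι → Set X} {x : X} {ω : ι → X} (hω : ∀ i, ω i ∈ projSet (Ω i) x)
    (hmin : IsLocalMin (fun y ↦ ∑ i, infDist y (Ω i)) x) :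
    IsLocalMin (fun y ↦ ∑ i, ‖y - ω i‖) x := by
  have heq : ∑ i, ‖x - ω i‖ = ∑ i, infDist x (Ω i) := Finset.sum_congr rfl fun i _ ↦ (hω i).2
  filter_upwards [hmin] with y hy
  calc ∑ i, ‖x - ω i‖ = ∑ i, infDist x (Ω i) := heq
    _ ≤ ∑ i, infDist y (Ω i) := hy
    _ ≤ ∑ i, ‖y - ω i‖ := Finset.sum_le_sum fun i _ ↦ by
      simpa only [dist_eq_norm] using infDist_le_dist_of_mem (hω i).1

theorem eq_of_mem_projSet_of_inv_norm_smul_sub_eq {X : Type*} [NormedAddCommGroup X]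
    [NormedSpace ℝ X] {Q : Set X} {x a b : X} (hx : x ∉ Q) (ha : a ∈ projSet Q x)
    (hb : b ∈ projSet Q x) (h : ‖x - a‖⁻¹ • (x - a) = ‖x - b‖⁻¹ • (x - b)) : a = b := by
  have hnorm : ‖x - a‖ = ‖x - b‖ := ha.2.trans hb.2.symm
  have hpos : ‖x - a‖ ≠ 0 := norm_ne_zero_iff.2 (sub_ne_zero.2 (ne_of_mem_of_not_mem ha.1 hx).symm)
  rw [← hnorm] at h
  exact sub_right_injective (smul_right_injective X (inv_ne_zero hpos) h)

section InnerProductSpace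

variable {X : Type*} [NormedAddCommGroup X] [InnerProductSpace ℝ X]

theorem hasFDerivAt_norm_of_ne_zero {x : X} (hx : x ≠ 0) :
    HasFDerivAt (‖·‖) (innerSL ℝ (‖x‖⁻¹ • x)) x := by
  have hsqrt := (Real.hasDerivAt_sqrt (pow_ne_zero 2 (norm_ne_zero_iff.2 hx))).comp_hasFDerivAt x
    (hasStrictFDerivAt_norm_sq x).hasFDerivAt
  have hfun : (fun y : X ↦ √(‖y‖ ^ 2)) = (‖·‖) := funext fun y ↦ Real.sqrt_sq (norm_nonneg y)
  have hder : (1 / (2 * √(‖x‖ ^ 2))) • (2 : ℕ) • innerSL ℝ x = innerSL ℝ (‖x‖⁻¹ • x) := by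
    rw [Real.sqrt_sq (norm_nonneg x), map_smul, ← Nat.cast_smul_eq_nsmul ℝ, smul_smul]
    congr 1
    push_cast
    field_simp
  rwa [Function.comp_def, hfun, hder] at hsqrt

theorem sum_inv_norm_smul_sub_eq_zero_of_isLocalMin {ι : Type*} [Fintype ι] {ω : ι → X} {x : X}
    (hx : ∀ i, x ≠ ω i) (hmin : IsLocalMin (fun y ↦ ∑ i, ‖y - ω i‖) x) :
    ∑ i, ‖x - ω i‖⁻¹ • (x - ω i) = 0 := by
  have hderiv : HasFDerivAt (fun y ↦ ∑ i, ‖y - ω i‖)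
      (innerSL ℝ (∑ i, ‖x - ω i‖⁻¹ • (x - ω i))) x := by
    rw [map_sum]
    refine HasFDerivAt.fun_sum fun i _ ↦ ?_
    simpa only [Function.comp_def, id, ContinuousLinearMap.comp_id] using
      (hasFDerivAt_norm_of_ne_zero (sub_ne_zero.2 (hx i))).comp x
        ((hasFDerivAt_id x).sub_const (ω i))
  have hzero :=
    congrArg (fun L ↦ L (∑ i, ‖x - ω i‖⁻¹ • (x - ω i))) (hmin.hasFDerivAt_eq_zero hderiv)
  simpa only [innerSL_apply_apply, zero_apply, inner_self_eq_zero] using hzero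

theorem sum_inv_norm_smul_sub_eq_zero_of_mem_projSet {ι : Type*} [Fintype ι] {Ω : ι → Set X}
    {x : X} {ω : ι → X} (hmin : IsLocalMin (fun y ↦ ∑ i, infDist y (Ω i)) x)
    (hx : ∀ i, x ∉ Ω i) (hω : ∀ i, ω i ∈ projSet (Ω i) x) :
    ∑ i, ‖x - ω i‖⁻¹ • (x - ω i) = 0 :=
  sum_inv_norm_smul_sub_eq_zero_of_isLocalMin (fun i ↦ (ne_of_mem_of_not_mem (hω i).1 (hx i)).symm)
    (isLocalMin_sum_norm_sub_of_mem_projSet hω hmin)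

end InnerProductSpace

theorem fermatTorricelli_projection_unique_general
    {X : Type*} [NormedAddCommGroup X] [InnerProductSpace ℝ X]
    (n : ℕ)
    (Ωi : Fin n → Set X)
    (xbar : X)
    (hloc : ∃ δ > (0 : ℝ), ∀ x : X, ‖x - xbar‖ < δ →
      ∑ i, infDist xbar (Ωi i) ≤ ∑ i, infDist x (Ωi i))
    (hout : ∀ i, xbar ∉ Ωi i)
    (hproj : ∀ i, (projSet (Ωi i) xbar).Nonempty) :
    ∀ i, ∃ ω, projSet (Ωi i) xbar = {ω} := by
  have hmin : IsLocalMin (fun y ↦ ∑ i, infDist y (Ωi i)) xbar := by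
    obtain ⟨δ, hδ, hδmin⟩ := hloc
    filter_upwards [ball_mem_nhds xbar hδ] with y hy using hδmin y (mem_ball_iff_norm.1 hy)
  choose ω hω using hproj
  have stationary : ∀ j, ∀ b ∈ projSet (Ωi j) xbar,
      ∑ i, ‖xbar - Function.update ω j b i‖⁻¹ • (xbar - Function.update ω j b i) = 0 :=
    fun j b hb ↦ sum_inv_norm_smul_sub_eq_zero_of_mem_projSet hmin hout
      ((Function.forall_update_iff ω fun i p ↦ p ∈ projSet (Ωi i) xbar).2
        ⟨hb, fun i _ ↦ hω i⟩)
  refine fun j ↦ ⟨ω j, eq_singleton_iff_unique_mem.2 ⟨hω j, fun a ha ↦ ?_⟩⟩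
  refine eq_of_mem_projSet_of_inv_norm_smul_sub_eq (hout j) ha (hω j) ?_
  exact Fintype.apply_eq_of_sum_apply_update_eq (fun p ↦ ‖xbar - p‖⁻¹ • (xbar - p)) ω j
    ((stationary j a ha).trans (stationary j (ω j) (hω j)).symm)

/-- Projection uniqueness at local optimal solutions of the (unconstrained)
generalized Fermat–Torricelli problem in a Hilbert space: if the sets `Ωᵢ` have
empty intersection, `x̄` is a local minimizer of `Σᵢ d(·;Ωᵢ)`, `x̄ ∉ Ωᵢ` and
`Π(x̄;Ωᵢ) ≠ ∅` for all `i`, then each `Π(x̄;Ωᵢ)` is a singleton. -/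
theorem fermatTorricelli_projection_unique
    {X : Type*} [NormedAddCommGroup X] [InnerProductSpace ℝ X] [CompleteSpace X]
    (n : ℕ) (hn : 2 ≤ n)
    (Ωi : Fin n → Set X) (hΩine : ∀ i, (Ωi i).Nonempty) (hΩic : ∀ i, IsClosed (Ωi i))
    (hinter : ⋂ i, Ωi i = ∅)
    (xbar : X)
    (hloc : ∃ δ > (0 : ℝ), ∀ x : X, ‖x - xbar‖ < δ →
      ∑ i, infDist xbar (Ωi i) ≤ ∑ i, infDist x (Ωi i))
    (hout : ∀ i, xbar ∉ Ωi i)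
    (hproj : ∀ i, (projSet (Ωi i) xbar).Nonempty) :
    ∀ i, ∃ ω, projSet (Ωi i) xbar = {ω} :=
  fermatTorricelli_projection_unique_general n Ωi xbar hloc hout hproj
end

section
/- Let X be a real Hilbert space and let Ω_1, Ω_2, Ω_3 be nonempty closed pairwise disjoint subsets of X. Let x̄ be a local optimal solution of the unconstrained problem: minimize Σ_{i=1}^3 d(x;Ω_i) over x ∈ X, and suppose that x̄ ∈ Ω_1 and Π(x̄;Ω_i) ≠ ∅ for i = 2, 3. Then for any choice of projections ω_i ∈ Π(x̄;Ω_i), i = 2, 3, the unit vectors a_i := (x̄ − ω_i)/d(x̄;Ω_i) satisfy ⟨a_2, a_3⟩ ≤ −1/2 and −a_2 − a_3 ∈ N̂(x̄;Ω_1). -/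
/-!
Each projection `ωᵢ` gives the quadratic upper bound
`d(x;Ωᵢ) ≤ ‖x - ωᵢ‖ ≤ dᵢ + ⟪aᵢ, x - x̄⟫ + ‖x - x̄‖² / (2 dᵢ)`, and `d(x̄;Ω₁) = 0`,
so local optimality of `x̄` gives `⟪-a₂ - a₃, x - x̄⟫ ≤ d(x;Ω₁) + C ‖x - x̄‖²` near `x̄`.
On `Ω₁` the distance term vanishes, which is the normal cone inclusion; everywhere it is
at most `‖x - x̄‖`, which along `x = x̄ - t (a₂ + a₃)`, `t → 0⁺`, forces `‖a₂ + a₃‖ ≤ 1`, i.e. `⟪a₂, a₃⟫ ≤ -1/2`.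
-/

open Set Metric
open scoped RealInnerProductSpace

open Filter Topology

section Projection

variable {X : Type*} [NormedAddCommGroup X]

theorem infDist_pos_of_mem_projSet {Q : Set X} {x ω : X} (hω : ω ∈ projSet Q x) (hx : x ∉ Q) :
    0 < infDist x Q := by
  rw [← hω.2, norm_pos_iff, sub_ne_zero]
  exact fun h => hx (h ▸ hω.1)

variable [InnerProductSpace ℝ X]

theorem norm_add_le_of_ne_zero {w : X} (hw : w ≠ 0) (u : X) :
    ‖w + u‖ ≤ ‖w‖ + ⟪w, u⟫ / ‖w‖ + ‖u‖ ^ 2 / (2 * ‖w‖) := by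
  have hpos : 0 < ‖w‖ := norm_pos_iff.2 hw
  have hsq : ‖w + u‖ ^ 2 = ‖w‖ ^ 2 + 2 * ⟪w, u⟫ + ‖u‖ ^ 2 := norm_add_sq_real w u
  rw [show ‖w‖ + ⟪w, u⟫ / ‖w‖ + ‖u‖ ^ 2 / (2 * ‖w‖) = (‖w‖ ^ 2 + ‖w + u‖ ^ 2) / (2 * ‖w‖) by
    field_simp; rw [hsq]; ring, le_div_iff₀ (by positivity)]
  nlinarith [sq_nonneg (‖w + u‖ - ‖w‖)]

theorem norm_inv_infDist_smul_sub_of_mem_projSet {Q : Set X} {x₀ ω : X}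
    (hω : ω ∈ projSet Q x₀) (hx₀ : x₀ ∉ Q) : ‖(infDist x₀ Q)⁻¹ • (x₀ - ω)‖ = 1 := by
  rw [norm_smul, hω.2, norm_inv, Real.norm_of_nonneg infDist_nonneg,
    inv_mul_cancel₀ (infDist_pos_of_mem_projSet hω hx₀).ne']

theorem infDist_le_of_mem_projSet {Q : Set X} {x₀ ω : X} (hω : ω ∈ projSet Q x₀) (hx₀ : x₀ ∉ Q)
    (x : X) : infDist x Q ≤ infDist x₀ Q + ⟪(infDist x₀ Q)⁻¹ • (x₀ - ω), x - x₀⟫ +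
      ‖x - x₀‖ ^ 2 / (2 * infDist x₀ Q) := by
  have hne : x₀ - ω ≠ 0 := norm_pos_iff.1 (hω.2 ▸ infDist_pos_of_mem_projSet hω hx₀)
  calc infDist x Q ≤ ‖(x₀ - ω) + (x - x₀)‖ := by
        rw [sub_add_sub_cancel', ← dist_eq_norm]; exact infDist_le_dist_of_mem hω.1
    _ ≤ _ := by
        rw [real_inner_smul_left, ← hω.2, inv_mul_eq_div]
        exact norm_add_le_of_ne_zero hne _

end Projection

section Inner

variable {X : Type*} [NormedAddCommGroup X] [InnerProductSpace ℝ X]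

theorem norm_le_of_eventually_inner_le {v x₀ : X} {L C : ℝ} (hL : 0 ≤ L)
    (h : ∀ᶠ x in 𝓝 x₀, ⟪v, x - x₀⟫ ≤ L * ‖x - x₀‖ + C * ‖x - x₀‖ ^ 2) : ‖v‖ ≤ L := by
  have hray : Tendsto (fun t : ℝ => x₀ + t • v) (𝓝[>] 0) (𝓝 x₀) := by
    have : Continuous fun t : ℝ => x₀ + t • v := by fun_prop
    simpa using (this.tendsto 0).mono_left nhdsWithin_le_nhds
  have hlim : Tendsto (fun t : ℝ => L * ‖v‖ + C * t * ‖v‖ ^ 2) (𝓝[>] 0) (𝓝 (L * ‖v‖)) := by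
    have : Continuous fun t : ℝ => L * ‖v‖ + C * t * ‖v‖ ^ 2 := by fun_prop
    simpa using (this.tendsto 0).mono_left nhdsWithin_le_nhds
  have hsq : ‖v‖ ^ 2 ≤ L * ‖v‖ := by
    refine ge_of_tendsto hlim ?_
    filter_upwards [hray.eventually h, self_mem_nhdsWithin] with t ht (htpos : 0 < t)
    simp only [add_sub_cancel_left, real_inner_smul_right, real_inner_self_eq_norm_sq, norm_smul,
      Real.norm_of_nonneg htpos.le] at ht
    nlinarith
  rcases (norm_nonneg v).eq_or_lt with h0 | hpos
  · exact h0 ▸ hL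
  · nlinarith

theorem mem_frechetNormalCone_of_eventually_inner_le {Ω : Set X} {v x₀ : X} {C : ℝ}
    (h : ∀ᶠ x in 𝓝 x₀, x ∈ Ω → ⟪v, x - x₀⟫ ≤ C * ‖x - x₀‖ ^ 2) :
    v ∈ frechetNormalCone Ω x₀ := by
  intro ε hε
  obtain ⟨δ, hδ, hball⟩ := Metric.eventually_nhds_iff.1 h
  refine ⟨min δ (ε / (|C| + 1)), lt_min hδ (by positivity), fun x hx hxδ => ?_⟩
  have hinner := hball ((dist_eq_norm x x₀).trans_lt (hxδ.trans_le (min_le_left _ _))) hx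
  have hsmall : (|C| + 1) * ‖x - x₀‖ ≤ ε :=
    (le_div_iff₀' (by positivity)).1 (hxδ.le.trans (min_le_right _ _))
  calc ⟪v, x - x₀⟫ ≤ C * ‖x - x₀‖ ^ 2 := hinner
    _ ≤ (|C| + 1) * ‖x - x₀‖ * ‖x - x₀‖ := by nlinarith [le_abs_self C, norm_nonneg (x - x₀)]
    _ ≤ ε * ‖x - x₀‖ := by gcongr

theorem inner_le_neg_half_of_norm_add_le_one {a b : X} (ha : ‖a‖ = 1) (hb : ‖b‖ = 1)
    (hab : ‖a + b‖ ≤ 1) : ⟪a, b⟫ ≤ -(1 / 2 : ℝ) := by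
  have h := norm_add_sq_real a b
  rw [ha, hb] at h
  nlinarith [norm_nonneg (a + b)]

end Inner

theorem fermatTorricelli_three_sets_in_case_general
    {X : Type*} [NormedAddCommGroup X] [InnerProductSpace ℝ X]
    (Ω1 Ω2 Ω3 : Set X)
    (h12 : Ω1 ∩ Ω2 = ∅) (h13 : Ω1 ∩ Ω3 = ∅)
    (xbar : X)
    (hloc : ∃ δ > (0 : ℝ), ∀ x : X, ‖x - xbar‖ < δ →
      infDist xbar Ω1 + infDist xbar Ω2 + infDist xbar Ω3 ≤
        infDist x Ω1 + infDist x Ω2 + infDist x Ω3)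
    (hin : xbar ∈ Ω1)
    (ω2 : X) (hω2 : ω2 ∈ projSet Ω2 xbar) (ω3 : X) (hω3 : ω3 ∈ projSet Ω3 xbar)
    (a2 a3 : X)
    (ha2 : a2 = (infDist xbar Ω2)⁻¹ • (xbar - ω2))
    (ha3 : a3 = (infDist xbar Ω3)⁻¹ • (xbar - ω3)) :
    ⟪a2, a3⟫ ≤ -(1 / 2 : ℝ) ∧ -a2 - a3 ∈ frechetNormalCone Ω1 xbar := by
  have hx2 : xbar ∉ Ω2 := (disjoint_iff_inter_eq_empty.2 h12).notMem_of_mem_left hin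
  have hx3 : xbar ∉ Ω3 := (disjoint_iff_inter_eq_empty.2 h13).notMem_of_mem_left hin
  set C := (2 * infDist xbar Ω2)⁻¹ + (2 * infDist xbar Ω3)⁻¹
  have hlocal : ∀ᶠ x in 𝓝 xbar, ⟪-a2 - a3, x - xbar⟫ ≤ infDist x Ω1 + C * ‖x - xbar‖ ^ 2 := by
    obtain ⟨δ, hδ, hmin⟩ := hloc
    filter_upwards [ball_mem_nhds xbar hδ] with x hx
    have hopt := hmin x (mem_ball_iff_norm.1 hx)
    have h2 := infDist_le_of_mem_projSet hω2 hx2 x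
    have h3 := infDist_le_of_mem_projSet hω3 hx3 x
    rw [infDist_zero_of_mem hin] at hopt
    rw [← ha2] at h2
    rw [← ha3] at h3
    have hC : C * ‖x - xbar‖ ^ 2 =
        ‖x - xbar‖ ^ 2 / (2 * infDist xbar Ω2) + ‖x - xbar‖ ^ 2 / (2 * infDist xbar Ω3) := by ring
    rw [inner_sub_left, inner_neg_left, hC]
    linarith
  refine ⟨inner_le_neg_half_of_norm_add_le_one
    (ha2 ▸ norm_inv_infDist_smul_sub_of_mem_projSet hω2 hx2)
    (ha3 ▸ norm_inv_infDist_smul_sub_of_mem_projSet hω3 hx3) ?_, ?_⟩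
  · rw [← norm_neg, neg_add']
    refine norm_le_of_eventually_inner_le (C := C) zero_le_one (hlocal.mono fun x hx => ?_)
    linarith [infDist_le_dist_of_mem (x := x) hin, dist_eq_norm x xbar]
  · exact mem_frechetNormalCone_of_eventually_inner_le
      (hlocal.mono fun x hx hxΩ => by simpa [infDist_zero_of_mem hxΩ] using hx)

/-- Necessary optimality conditions for the generalized Fermat–Torricelli problem
with three pairwise disjoint nonconvex sets in a Hilbert space, in the case where
the local solution `x̄` belongs to `Ω₁`: the unit vectors
`aᵢ = (x̄ − ωᵢ)/d(x̄;Ωᵢ)`, `i = 2,3`, satisfy `⟨a₂,a₃⟩ ≤ −1/2` and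
`−a₂ − a₃ ∈ N̂(x̄;Ω₁)`. -/
theorem fermatTorricelli_three_sets_in_case
    {X : Type*} [NormedAddCommGroup X] [InnerProductSpace ℝ X] [CompleteSpace X]
    (Ω1 Ω2 Ω3 : Set X)
    (h1ne : Ω1.Nonempty) (h2ne : Ω2.Nonempty) (h3ne : Ω3.Nonempty)
    (h1c : IsClosed Ω1) (h2c : IsClosed Ω2) (h3c : IsClosed Ω3)
    (h12 : Ω1 ∩ Ω2 = ∅) (h13 : Ω1 ∩ Ω3 = ∅) (h23 : Ω2 ∩ Ω3 = ∅)
    (xbar : X)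
    (hloc : ∃ δ > (0 : ℝ), ∀ x : X, ‖x - xbar‖ < δ →
      infDist xbar Ω1 + infDist xbar Ω2 + infDist xbar Ω3 ≤
        infDist x Ω1 + infDist x Ω2 + infDist x Ω3)
    (hin : xbar ∈ Ω1)
    (ω2 : X) (hω2 : ω2 ∈ projSet Ω2 xbar) (ω3 : X) (hω3 : ω3 ∈ projSet Ω3 xbar)
    (a2 a3 : X)
    (ha2 : a2 = (infDist xbar Ω2)⁻¹ • (xbar - ω2))
    (ha3 : a3 = (infDist xbar Ω3)⁻¹ • (xbar - ω3)) :
    ⟪a2, a3⟫ ≤ -(1 / 2 : ℝ) ∧ -a2 - a3 ∈ frechetNormalCone Ω1 xbar :=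
  fermatTorricelli_three_sets_in_case_general Ω1 Ω2 Ω3 h12 h13 xbar hloc hin ω2 hω2 ω3 hω3 a2 a3 ha2
    ha3
end

section
/- Let X be a real Hilbert space and let Ω_1, Ω_2, Ω_3 be nonempty closed convex pairwise disjoint subsets of X, and let x̄ ∈ X. For each i with x̄ ∉ Ω_i let a_i := (x̄ − P(x̄;Ω_i))/d(x̄;Ω_i), where P(x̄;Ω_i) is the unique metric projection of x̄ onto Ω_i. Suppose that either (a) x̄ ∈ Ω_1, ⟨a_2, a_3⟩ ≤ −1/2 and −a_2 − a_3 ∈ N(x̄;Ω_1), or (b) x̄ ∉ Ω_i for i = 1, 2, 3 and ⟨a_i, a_j⟩ = −1/2 for all i ≠ j. Then x̄ is a global optimal solution of the unconstrained problem: minimize Σ_{i=1}^3 d(x;Ω_i) over x ∈ X. -/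
/-!
For `x̄` with nearest point `p` in a convex set `Ω`, the vector `a = (x̄ - p) / d(x̄;Ω)` is a
subgradient of `d(·;Ω)` at `x̄` of norm at most one: it lies in the normal cone to `Ω` at `p`, so
`⟨a, x - p⟩ ≤ d(x;Ω)`, and `⟨a, x̄ - p⟩ = d(x̄;Ω)`. In case (b) the vectors `aᵢ`, of norm at
most one with pairwise inner products `-1/2`, sum to zero since `‖a₁ + a₂ + a₃‖² ≤ 3 - 3`, so
the three subgradient inequalities add up to optimality. In case (a), `d(x̄;Ω₁) = 0` and
`‖a₂ + a₃‖ ≤ 1`, so the normal vector `-a₂ - a₃` to `Ω₁` at `x̄` is a subgradient of `d(·;Ω₁)`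
there, and again the subgradients sum to zero.
-/

open Set Metric
open scoped RealInnerProductSpace

/-- The normal cone of convex analysis to a convex set `C` at `x̄ ∈ C`. -/
def convexNormalCone {X : Type*} [NormedAddCommGroup X] [InnerProductSpace ℝ X]
    (C : Set X) (xbar : X) : Set X :=
  {v | ∀ x ∈ C, ⟪v, x - xbar⟫ ≤ 0}

section

variable {X : Type*} [NormedAddCommGroup X] [InnerProductSpace ℝ X] {Ω : Set X} {a p v y : X}

theorem smul_mem_convexNormalCone {c : ℝ} (hc : 0 ≤ c) (hv : v ∈ convexNormalCone Ω p) :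
    c • v ∈ convexNormalCone Ω p := fun q hq => by
  rw [real_inner_smul_left]
  exact mul_nonpos_of_nonneg_of_nonpos hc (hv q hq)

theorem sub_mem_convexNormalCone_of_norm_eq_infDist (hΩ : Convex ℝ Ω) (hp : p ∈ Ω)
    (hpd : ‖y - p‖ = infDist y Ω) : y - p ∈ convexNormalCone Ω p := by
  refine (norm_eq_iInf_iff_real_inner_le_zero hΩ hp).mp (hpd.trans ?_)
  simp only [infDist_eq_iInf, dist_eq_norm]

theorem inner_le_infDist_of_mem_convexNormalCone (hp : p ∈ Ω) (hv : v ∈ convexNormalCone Ω p)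
    (hv1 : ‖v‖ ≤ 1) (x : X) : ⟪v, x - p⟫ ≤ infDist x Ω := by
  refine (le_infDist ⟨p, hp⟩).mpr fun q hq => ?_
  calc ⟪v, x - p⟫ = ⟪v, x - q⟫ + ⟪v, q - p⟫ := by rw [← inner_add_right, sub_add_sub_cancel]
    _ ≤ ‖v‖ * ‖x - q‖ + 0 := add_le_add (real_inner_le_norm _ _) (hv q hq)
    _ ≤ dist x q := by rw [add_zero, dist_eq_norm]; exact mul_le_of_le_one_left (norm_nonneg _) hv1

/- Since `0⁻¹ = 0`, the next two facts need no `y ∉ Ω`: for `y ∈ Ω` they are about `a = 0`. -/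

theorem norm_le_one_of_eq_inv_infDist_smul (hpd : ‖y - p‖ = infDist y Ω)
    (ha : a = (infDist y Ω)⁻¹ • (y - p)) : ‖a‖ ≤ 1 := by
  rw [ha, ← hpd, norm_smul, norm_inv, norm_norm]
  exact inv_mul_le_one

theorem infDist_add_inner_le_infDist (hΩ : Convex ℝ Ω) (hp : p ∈ Ω)
    (hpd : ‖y - p‖ = infDist y Ω) (ha : a = (infDist y Ω)⁻¹ • (y - p)) (x : X) :
    infDist y Ω + ⟪a, x - y⟫ ≤ infDist x Ω := by
  have ha_normal : a ∈ convexNormalCone Ω p := ha ▸ smul_mem_convexNormalCone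
    (inv_nonneg.mpr infDist_nonneg) (sub_mem_convexNormalCone_of_norm_eq_infDist hΩ hp hpd)
  have ha_proj : ⟪a, y - p⟫ = infDist y Ω := by
    rw [ha, real_inner_smul_left, real_inner_self_eq_norm_sq, hpd, sq, ← div_eq_inv_mul,
      mul_self_div_self]
  calc infDist y Ω + ⟪a, x - y⟫ = ⟪a, x - p⟫ := by
        rw [← ha_proj, ← inner_add_right, add_comm, sub_add_sub_cancel]
    _ ≤ infDist x Ω := inner_le_infDist_of_mem_convexNormalCone hp ha_normal
        (norm_le_one_of_eq_inv_infDist_smul hpd ha) x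

end

section

variable {E : Type*} [NormedAddCommGroup E] [InnerProductSpace ℝ E] {a b c : E}

theorem norm_add_le_one_of_inner_le (ha : ‖a‖ ≤ 1) (hb : ‖b‖ ≤ 1) (hab : ⟪a, b⟫ ≤ -(1 / 2)) :
    ‖a + b‖ ≤ 1 := by
  refine (sq_le_one_iff₀ (norm_nonneg _)).mp ?_
  rw [norm_add_sq_real]
  nlinarith [norm_nonneg a, norm_nonneg b]

theorem add_add_eq_zero_of_inner_eq (ha : ‖a‖ ≤ 1) (hb : ‖b‖ ≤ 1) (hc : ‖c‖ ≤ 1)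
    (hab : ⟪a, b⟫ = -(1 / 2)) (hac : ⟪a, c⟫ = -(1 / 2)) (hbc : ⟪b, c⟫ = -(1 / 2)) :
    a + b + c = 0 := by
  have hsq : ‖a + b + c‖ ^ 2 ≤ 0 := by
    rw [norm_add_sq_real, norm_add_sq_real, inner_add_left, hab, hac, hbc]
    nlinarith [norm_nonneg a, norm_nonneg b, norm_nonneg c]
  exact norm_eq_zero.mp (pow_eq_zero_iff two_ne_zero |>.mp (hsq.antisymm (sq_nonneg _)))

end

theorem fermatTorricelli_three_sets_sufficient_general
    {X : Type*} [NormedAddCommGroup X] [InnerProductSpace ℝ X]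
    (Ω1 Ω2 Ω3 : Set X)
    (h1conv : Convex ℝ Ω1) (h2conv : Convex ℝ Ω2) (h3conv : Convex ℝ Ω3)
    (xbar : X)
    (p1 p2 p3 : X)
    (hp1 : p1 ∈ Ω1 ∧ ‖xbar - p1‖ = infDist xbar Ω1)
    (hp2 : p2 ∈ Ω2 ∧ ‖xbar - p2‖ = infDist xbar Ω2)
    (hp3 : p3 ∈ Ω3 ∧ ‖xbar - p3‖ = infDist xbar Ω3)
    (a1 a2 a3 : X)
    (ha1 : a1 = (infDist xbar Ω1)⁻¹ • (xbar - p1))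
    (ha2 : a2 = (infDist xbar Ω2)⁻¹ • (xbar - p2))
    (ha3 : a3 = (infDist xbar Ω3)⁻¹ • (xbar - p3))
    (hcase :
      (xbar ∈ Ω1 ∧ ⟪a2, a3⟫ ≤ -(1 / 2 : ℝ) ∧ -a2 - a3 ∈ convexNormalCone Ω1 xbar) ∨
      (xbar ∉ Ω1 ∧ xbar ∉ Ω2 ∧ xbar ∉ Ω3 ∧
        ⟪a1, a2⟫ = -(1 / 2 : ℝ) ∧ ⟪a1, a3⟫ = -(1 / 2 : ℝ) ∧ ⟪a2, a3⟫ = -(1 / 2 : ℝ))) :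
    ∀ x : X, infDist xbar Ω1 + infDist xbar Ω2 + infDist xbar Ω3 ≤
      infDist x Ω1 + infDist x Ω2 + infDist x Ω3 := by
  intro x
  have hn2 := norm_le_one_of_eq_inv_infDist_smul hp2.2 ha2
  have hn3 := norm_le_one_of_eq_inv_infDist_smul hp3.2 ha3
  have hsub2 := infDist_add_inner_le_infDist h2conv hp2.1 hp2.2 ha2 x
  have hsub3 := infDist_add_inner_le_infDist h3conv hp3.1 hp3.2 ha3 x
  rcases hcase with ⟨hx1, h23, hnormal⟩ | ⟨-, -, -, h12, h13, h23⟩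
  · have hn : ‖-a2 - a3‖ ≤ 1 := by
      rw [← neg_add', norm_neg]; exact norm_add_le_one_of_inner_le hn2 hn3 h23
    have hsub1 := inner_le_infDist_of_mem_convexNormalCone hx1 hnormal hn x
    rw [inner_sub_left, inner_neg_left] at hsub1
    linarith [infDist_zero_of_mem hx1]
  · have hsub1 := infDist_add_inner_le_infDist h1conv hp1.1 hp1.2 ha1 x
    have hzero := add_add_eq_zero_of_inner_eq
      (norm_le_one_of_eq_inv_infDist_smul hp1.2 ha1) hn2 hn3 h12 h13 h23
    have hinner : ⟪a1 + a2 + a3, x - xbar⟫ = 0 := by rw [hzero, inner_zero_left]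
    rw [inner_add_left, inner_add_left] at hinner
    linarith

/-- Sufficient optimality conditions for the generalized Fermat–Torricelli problem
with three pairwise disjoint closed convex sets in a Hilbert space: if either
(a) `x̄ ∈ Ω₁`, `⟨a₂,a₃⟩ ≤ −1/2` and `−a₂ − a₃ ∈ N(x̄;Ω₁)`, or
(b) `x̄ ∉ Ωᵢ` for all `i` and `⟨aᵢ,aⱼ⟩ = −1/2` for all `i ≠ j`,
where `aᵢ = (x̄ − P(x̄;Ωᵢ))/d(x̄;Ωᵢ)`, then `x̄` is a global minimizer of
`Σᵢ d(·;Ωᵢ)` over `X`. -/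
theorem fermatTorricelli_three_sets_sufficient
    {X : Type*} [NormedAddCommGroup X] [InnerProductSpace ℝ X] [CompleteSpace X]
    (Ω1 Ω2 Ω3 : Set X)
    (h1ne : Ω1.Nonempty) (h2ne : Ω2.Nonempty) (h3ne : Ω3.Nonempty)
    (h1c : IsClosed Ω1) (h2c : IsClosed Ω2) (h3c : IsClosed Ω3)
    (h1conv : Convex ℝ Ω1) (h2conv : Convex ℝ Ω2) (h3conv : Convex ℝ Ω3)
    (h12 : Ω1 ∩ Ω2 = ∅) (h13 : Ω1 ∩ Ω3 = ∅) (h23 : Ω2 ∩ Ω3 = ∅)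
    (xbar : X)
    (p1 p2 p3 : X)
    (hp1 : p1 ∈ Ω1 ∧ ‖xbar - p1‖ = infDist xbar Ω1)
    (hp2 : p2 ∈ Ω2 ∧ ‖xbar - p2‖ = infDist xbar Ω2)
    (hp3 : p3 ∈ Ω3 ∧ ‖xbar - p3‖ = infDist xbar Ω3)
    (a1 a2 a3 : X)
    (ha1 : a1 = (infDist xbar Ω1)⁻¹ • (xbar - p1))
    (ha2 : a2 = (infDist xbar Ω2)⁻¹ • (xbar - p2))
    (ha3 : a3 = (infDist xbar Ω3)⁻¹ • (xbar - p3))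
    (hcase :
      (xbar ∈ Ω1 ∧ ⟪a2, a3⟫ ≤ -(1 / 2 : ℝ) ∧ -a2 - a3 ∈ convexNormalCone Ω1 xbar) ∨
      (xbar ∉ Ω1 ∧ xbar ∉ Ω2 ∧ xbar ∉ Ω3 ∧
        ⟪a1, a2⟫ = -(1 / 2 : ℝ) ∧ ⟪a1, a3⟫ = -(1 / 2 : ℝ) ∧ ⟪a2, a3⟫ = -(1 / 2 : ℝ))) :
    ∀ x : X, infDist xbar Ω1 + infDist xbar Ω2 + infDist xbar Ω3 ≤
      infDist x Ω1 + infDist x Ω2 + infDist x Ω3 :=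
  fermatTorricelli_three_sets_sufficient_general Ω1 Ω2 Ω3 h1conv h2conv h3conv xbar p1 p2 p3 hp1 hp2
    hp3 a1 a2 a3 ha1 ha2 ha3 hcase
end

section
/- Let Ω, Ω_1, Ω_2 be nonempty closed convex subsets of the Euclidean plane ℝ² with Ω ∩ Ω_1 = ∅ and Ω ∩ Ω_2 = ∅, let x̄ ∈ Ω, and suppose that N(x̄;Ω) = span{v} for some v ≠ 0. Let a_i := (x̄ − P(x̄;Ω_i))/d(x̄;Ω_i) for i = 1, 2, where P(x̄;Ω_i) is the unique metric projection of x̄ onto Ω_i. If either a_1 + a_2 = 0, or both a_1 ≠ a_2 and cos(a_1, v) = cos(a_2, v), then x̄ is a global optimal solution of the problem: minimize d(x;Ω_1) + d(x;Ω_2) subject to x ∈ Ω. -/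
open Set Metric
open scoped RealInnerProductSpace

/-- `cos(u,v) = ⟨u,v⟩/(‖u‖·‖v‖)` for nonzero vectors. -/
noncomputable def rcos {X : Type*} [NormedAddCommGroup X] [InnerProductSpace ℝ X]
    (u v : X) : ℝ :=
  ⟪u, v⟫ / (‖u‖ * ‖v‖)

/-!
With `dᵢ = d(x̄;Ωᵢ)`, the unit vector `aᵢ` is a subgradient of `d(·;Ωᵢ)` at `x̄`, so
`d(x;Ω₁) + d(x;Ω₂) ≥ d₁ + d₂ + ⟨a₁ + a₂, x − x̄⟩`, and it suffices that `−(a₁ + a₂)` is normal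
to `Ω` at `x̄`. This is trivial if `a₁ + a₂ = 0`. Otherwise `a₁ + a₂ ⟂ a₁ − a₂` because
`‖a₁‖ = ‖a₂‖`, and `v ⟂ a₁ − a₂` because the cosines agree; in the plane the orthogonal
complement of `a₁ − a₂ ≠ 0` is a line, so `a₁ + a₂ ∈ span{v} = N(x̄;Ω)`, and so is its negative.
-/

section InnerProductSpace

variable {E : Type*} [NormedAddCommGroup E] [InnerProductSpace ℝ E]

theorem Convex.inner_add_infDist_le_infDist {s : Set E} (hs : Convex ℝ s) {xbar p : E}
    (hp : p ∈ s) (hpd : ‖xbar - p‖ = infDist xbar s) (x : E) :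
    ⟪(infDist xbar s)⁻¹ • (xbar - p), x - xbar⟫ + infDist xbar s ≤ infDist x s := by
  have hproj : ∀ q ∈ s, ⟪xbar - p, q - p⟫ ≤ 0 := by
    refine (norm_eq_iInf_iff_real_inner_le_zero hs hp).1 ?_
    rw [hpd, infDist_eq_iInf]
    simp only [dist_eq_norm]
  rcases (infDist_nonneg : 0 ≤ infDist xbar s).eq_or_lt with hd | hd
  · -- `0⁻¹ = 0` kills the inner product
    rw [← hd]
    simpa using infDist_nonneg
  set d := infDist xbar s
  have hnorm : ‖d⁻¹ • (xbar - p)‖ = 1 := by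
    rw [norm_smul, hpd, norm_inv, Real.norm_of_nonneg hd.le, inv_mul_cancel₀ hd.ne']
  have hxbar : ⟪d⁻¹ • (xbar - p), xbar - p⟫ = d := by
    rw [real_inner_smul_left, real_inner_self_eq_norm_sq, hpd]
    field_simp
  refine (le_infDist ⟨p, hp⟩).2 fun q hq => ?_
  calc ⟪d⁻¹ • (xbar - p), x - xbar⟫ + d = ⟪d⁻¹ • (xbar - p), x - p⟫ := by
        rw [show x - p = (x - xbar) + (xbar - p) by abel, inner_add_right, hxbar]
    _ ≤ ⟪d⁻¹ • (xbar - p), x - q⟫ := by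
        have hq' : ⟪d⁻¹ • (xbar - p), q - p⟫ ≤ 0 := by
          rw [real_inner_smul_left]
          exact mul_nonpos_of_nonneg_of_nonpos (inv_nonneg.2 hd.le) (hproj q hq)
        rw [show x - p = (x - q) + (q - p) by abel, inner_add_right]
        linarith
    _ ≤ ‖d⁻¹ • (xbar - p)‖ * ‖x - q‖ := real_inner_le_norm _ _
    _ = dist x q := by rw [hnorm, one_mul, dist_eq_norm]

theorem norm_inv_infDist_smul_sub {s : Set E} {xbar p : E} (hxbar : xbar ∉ s) (hp : p ∈ s)
    (hpd : ‖xbar - p‖ = infDist xbar s) :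
    ‖(infDist xbar s)⁻¹ • (xbar - p)‖ = 1 := by
  rw [← hpd]
  exact norm_smul_inv_norm (sub_ne_zero.2 fun h => hxbar (h ▸ hp))

theorem inner_eq_inner_of_rcos_eq {u₁ u₂ v : E} (hu₁ : ‖u₁‖ = 1) (hu₂ : ‖u₂‖ = 1) (hv : v ≠ 0)
    (h : rcos u₁ v = rcos u₂ v) : ⟪u₁, v⟫ = ⟪u₂, v⟫ := by
  rwa [rcos, rcos, hu₁, hu₂, div_left_inj' (by simpa using hv)] at h

theorem neg_mem_convexNormalCone_iff {C : Set E} {xbar w : E} :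
    -w ∈ convexNormalCone C xbar ↔ ∀ x ∈ C, 0 ≤ ⟪w, x - xbar⟫ := by
  simp only [convexNormalCone, mem_ofPred_eq, inner_neg_left, neg_nonpos]

end InnerProductSpace

section Plane

variable {E : Type*} [NormedAddCommGroup E] [InnerProductSpace ℝ E] [FiniteDimensional ℝ E]

theorem mem_span_singleton_of_inner_eq_zero (hE : Module.finrank ℝ E = 2) {u v w : E}
    (hw : w ≠ 0) (hv : v ≠ 0) (hvw : ⟪v, w⟫ = 0) (huw : ⟪u, w⟫ = 0) :
    u ∈ Submodule.span ℝ {v} := by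
  have hline : Module.finrank ℝ (ℝ ∙ w)ᗮ = 1 := by
    have := (ℝ ∙ w).finrank_add_finrank_orthogonal
    rw [finrank_span_singleton hw, hE] at this
    omega
  have hspan : ℝ ∙ v = (ℝ ∙ w)ᗮ := by
    refine Submodule.eq_of_le_of_finrank_eq ?_ (by rw [finrank_span_singleton hv, hline])
    rw [Submodule.span_singleton_le_iff_mem, Submodule.mem_orthogonal_singleton_iff_inner_left]
    exact hvw
  rw [hspan, Submodule.mem_orthogonal_singleton_iff_inner_left]
  exact huw

theorem add_mem_span_singleton_of_rcos_eq (hE : Module.finrank ℝ E = 2) {a₁ a₂ v : E}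
    (ha₁ : ‖a₁‖ = 1) (ha₂ : ‖a₂‖ = 1) (hv : v ≠ 0) (hne : a₁ ≠ a₂)
    (hcos : rcos a₁ v = rcos a₂ v) :
    a₁ + a₂ ∈ Submodule.span ℝ {v} := by
  refine mem_span_singleton_of_inner_eq_zero hE (sub_ne_zero.2 hne) hv ?_
    ((real_inner_add_sub_eq_zero_iff a₁ a₂).2 (ha₁.trans ha₂.symm))
  rw [real_inner_comm, inner_sub_left, inner_eq_inner_of_rcos_eq ha₁ ha₂ hv hcos, sub_self]

end Plane

theorem heron_two_sets_sufficient_plane_general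
    (Ω Ω1 Ω2 : Set (EuclideanSpace ℝ (Fin 2)))
    (h1conv : Convex ℝ Ω1) (h2conv : Convex ℝ Ω2)
    (hd1 : Ω ∩ Ω1 = ∅) (hd2 : Ω ∩ Ω2 = ∅)
    (xbar : EuclideanSpace ℝ (Fin 2)) (hxbar : xbar ∈ Ω)
    (v : EuclideanSpace ℝ (Fin 2)) (hv : v ≠ 0)
    (hN : convexNormalCone Ω xbar = (Submodule.span ℝ {v} : Set (EuclideanSpace ℝ (Fin 2))))
    (p1 p2 : EuclideanSpace ℝ (Fin 2))
    (hp1 : p1 ∈ Ω1 ∧ ‖xbar - p1‖ = infDist xbar Ω1)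
    (hp2 : p2 ∈ Ω2 ∧ ‖xbar - p2‖ = infDist xbar Ω2)
    (a1 a2 : EuclideanSpace ℝ (Fin 2))
    (ha1 : a1 = (infDist xbar Ω1)⁻¹ • (xbar - p1))
    (ha2 : a2 = (infDist xbar Ω2)⁻¹ • (xbar - p2))
    (hcase : a1 + a2 = 0 ∨ (a1 ≠ a2 ∧ rcos a1 v = rcos a2 v)) :
    ∀ x ∈ Ω, infDist xbar Ω1 + infDist xbar Ω2 ≤ infDist x Ω1 + infDist x Ω2 := by
  have hnormal : -(a1 + a2) ∈ convexNormalCone Ω xbar := by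
    rcases hcase with hzero | ⟨hne, hcos⟩
    · exact neg_mem_convexNormalCone_iff.2 fun x _ => by simp [hzero]
    have hx1 : xbar ∉ Ω1 := disjoint_left.1 (disjoint_iff_inter_eq_empty.2 hd1) hxbar
    have hx2 : xbar ∉ Ω2 := disjoint_left.1 (disjoint_iff_inter_eq_empty.2 hd2) hxbar
    rw [hN]
    refine neg_mem (add_mem_span_singleton_of_rcos_eq finrank_euclideanSpace_fin ?_ ?_ hv hne hcos)
    · rw [ha1]; exact norm_inv_infDist_smul_sub hx1 hp1.1 hp1.2
    · rw [ha2]; exact norm_inv_infDist_smul_sub hx2 hp2.1 hp2.2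
  intro x hx
  have hb1 := h1conv.inner_add_infDist_le_infDist hp1.1 hp1.2 x
  have hb2 := h2conv.inner_add_infDist_le_infDist hp2.1 hp2.2 x
  have hsum := neg_mem_convexNormalCone_iff.1 hnormal x hx
  rw [inner_add_left, ha1, ha2] at hsum
  linarith

/-- Sufficient optimality conditions for the generalized Heron problem with two
convex sets in the Euclidean plane: if `N(x̄;Ω) = span{v}` and either `a₁ + a₂ = 0`
or (`a₁ ≠ a₂` and `cos(a₁,v) = cos(a₂,v)`) for `aᵢ = (x̄ − P(x̄;Ωᵢ))/d(x̄;Ωᵢ)`,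
then `x̄` is a global optimal solution. -/
theorem heron_two_sets_sufficient_plane
    (Ω Ω1 Ω2 : Set (EuclideanSpace ℝ (Fin 2)))
    (hΩne : Ω.Nonempty) (h1ne : Ω1.Nonempty) (h2ne : Ω2.Nonempty)
    (hΩc : IsClosed Ω) (h1c : IsClosed Ω1) (h2c : IsClosed Ω2)
    (hΩconv : Convex ℝ Ω) (h1conv : Convex ℝ Ω1) (h2conv : Convex ℝ Ω2)
    (hd1 : Ω ∩ Ω1 = ∅) (hd2 : Ω ∩ Ω2 = ∅)
    (xbar : EuclideanSpace ℝ (Fin 2)) (hxbar : xbar ∈ Ω)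
    (v : EuclideanSpace ℝ (Fin 2)) (hv : v ≠ 0)
    (hN : convexNormalCone Ω xbar = (Submodule.span ℝ {v} : Set (EuclideanSpace ℝ (Fin 2))))
    (p1 p2 : EuclideanSpace ℝ (Fin 2))
    (hp1 : p1 ∈ Ω1 ∧ ‖xbar - p1‖ = infDist xbar Ω1)
    (hp2 : p2 ∈ Ω2 ∧ ‖xbar - p2‖ = infDist xbar Ω2)
    (a1 a2 : EuclideanSpace ℝ (Fin 2))
    (ha1 : a1 = (infDist xbar Ω1)⁻¹ • (xbar - p1))
    (ha2 : a2 = (infDist xbar Ω2)⁻¹ • (xbar - p2))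
    (hcase : a1 + a2 = 0 ∨ (a1 ≠ a2 ∧ rcos a1 v = rcos a2 v)) :
    ∀ x ∈ Ω, infDist xbar Ω1 + infDist xbar Ω2 ≤ infDist x Ω1 + infDist x Ω2 :=
  heron_two_sets_sufficient_plane_general Ω Ω1 Ω2 h1conv h2conv hd1 hd2 xbar hxbar v hv hN p1 p2 hp1
    hp2 a1 a2 ha1 ha2 hcase
end

section
/- In ℝ², let F := {(x₁,x₂) : |x₁| + |x₂| ≤ 1} be the closed unit diamond and let Ω := [a−r, a+r] × [b−r, b+r] be the square centered at (a,b) with short radius r > 0. Let T(x) := T^F_Ω(x) be the associated (convex) minimal time function. Then the vector v(x̄₁,x̄₂) defined by the following cases is a subgradient of T at (x̄₁,x̄₂), i.e., v(x̄₁,x̄₂) ∈ ∂T(x̄₁,x̄₂): v = (1,0) if |x̄₂−b| ≤ r and x̄₁ > a+r; v = (−1,0) if |x̄₂−b| ≤ r and x̄₁ < a−r; v = (0,1) if |x̄₁−a| ≤ r and x̄₂ > b+r; v = (0,−1) if |x̄₁−a| ≤ r and x̄₂ < b−r; v = (1,1) if x̄₁ > a+r and x̄₂ > b+r; v = (−1,1)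 if x̄₁ < a−r and x̄₂ > b+r; v = (−1,−1) if x̄₁ < a−r and x̄₂ < b−r; v = (1,−1) if x̄₁ > a+r and x̄₂ < b−r; v = (0,0) if (x̄₁,x̄₂) ∈ Ω. -/
/-!
Since `F` is the closed unit ball of the `ℓ¹` norm, `T(x)` is the `ℓ¹` distance from `x` to `Ω`,
and for a box this splits as `d₁(x₁) + d₂(x₂)`, where `dᵢ` is the distance of a coordinate to the
corresponding side interval. Each `dᵢ` is convex with subderivative `1`, `-1` or `0` according as
the coordinate lies to the right of, to the left of, or inside its interval, and a pair of
subderivatives of the summands is a subgradient of the separable sum.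
-/

open Set Metric Pointwise

/-- `v` is a subgradient (in the sense of convex analysis, with the standard
pairing of `ℝ²`) of `φ : ℝ × ℝ → ℝ` at `xbar`. -/
def IsSubgradAt (φ : ℝ × ℝ → ℝ) (xbar v : ℝ × ℝ) : Prop :=
  ∀ x : ℝ × ℝ, v.1 * (x.1 - xbar.1) + v.2 * (x.2 - xbar.2) ≤ φ x - φ xbar

/-- The distance from `s` to the interval `[c - r, c + r]`. -/
noncomputable def intervalDist (c r s : ℝ) : ℝ := max (|s - c| - r) 0

def IsSubderivAt (f : ℝ → ℝ) (s v : ℝ) : Prop :=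
  ∀ t, v * (t - s) ≤ f t - f s

theorem IsSubderivAt.isSubgradAt_add {f g : ℝ → ℝ} {xbar : ℝ × ℝ} {v₁ v₂ : ℝ}
    (hf : IsSubderivAt f xbar.1 v₁) (hg : IsSubderivAt g xbar.2 v₂) :
    IsSubgradAt (fun x ↦ f x.1 + g x.2) xbar (v₁, v₂) :=
  fun x ↦ by linarith [hf x.1, hg x.2]

section intervalDist

variable {c r s : ℝ}

lemma intervalDist_nonneg (c r s : ℝ) : 0 ≤ intervalDist c r s := le_max_right _ _

lemma abs_sub_sub_le_intervalDist (c r s : ℝ) : |s - c| - r ≤ intervalDist c r s :=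
  le_max_left _ _

lemma intervalDist_le_abs_sub {q : ℝ} (hq : q ∈ Icc (c - r) (c + r)) :
    intervalDist c r s ≤ |q - s| := by
  obtain ⟨hlo, hhi⟩ := hq
  refine max_le ?_ (abs_nonneg _)
  cases abs_cases (s - c) <;> cases abs_cases (q - s) <;> linarith

/-- The distance is attained at the projection of `s` onto the interval. -/
lemma exists_mem_Icc_abs_sub_eq_intervalDist (hr : 0 ≤ r) (s : ℝ) :
    ∃ q ∈ Icc (c - r) (c + r), |q - s| = intervalDist c r s := by
  refine ⟨max (c - r) (min s (c + r)),
    ⟨le_max_left _ _, max_le (by linarith) (min_le_right _ _)⟩, ?_⟩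
  unfold intervalDist
  rcases le_total s (c - r) with h | h
  · rw [min_eq_left (by linarith), max_eq_left h, abs_of_nonneg (by linarith),
      abs_of_nonpos (by linarith), max_eq_left (by linarith)]
    ring
  rcases le_total s (c + r) with h' | h'
  · rw [min_eq_left h', max_eq_right h, sub_self, abs_zero, max_eq_right]
    exact sub_nonpos.mpr (abs_sub_le_iff.mpr ⟨by linarith, by linarith⟩)
  · rw [min_eq_right h', max_eq_right (by linarith), abs_of_nonpos (by linarith),
      abs_of_nonneg (by linarith), max_eq_left (by linarith)]
    ring

lemma intervalDist_isSubderivAt_one (hr : 0 ≤ r) (hs : c + r < s) :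
    IsSubderivAt (intervalDist c r) s 1 := by
  intro t
  have hs' : intervalDist c r s = s - c - r := by
    rw [intervalDist, abs_of_pos (by linarith), max_eq_left (by linarith)]
  rw [hs']
  linarith [abs_sub_sub_le_intervalDist c r t, le_abs_self (t - c)]

lemma intervalDist_isSubderivAt_neg_one (hr : 0 ≤ r) (hs : s < c - r) :
    IsSubderivAt (intervalDist c r) s (-1) := by
  intro t
  have hs' : intervalDist c r s = c - s - r := by
    rw [intervalDist, abs_of_neg (by linarith), max_eq_left (by linarith)]
    ring
  rw [hs']
  linarith [abs_sub_sub_le_intervalDist c r t, neg_abs_le (t - c)]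

lemma intervalDist_isSubderivAt_zero (hs : |s - c| ≤ r) :
    IsSubderivAt (intervalDist c r) s 0 := by
  intro t
  have hs' : intervalDist c r s = 0 := max_eq_right (by linarith)
  rw [zero_mul, hs', sub_zero]
  exact intervalDist_nonneg c r t

end intervalDist

lemma mem_singleton_add_smul_diamond {x y : ℝ × ℝ} {t : ℝ} (ht : 0 ≤ t) :
    y ∈ {x} + t • {p : ℝ × ℝ | |p.1| + |p.2| ≤ 1} ↔ |y.1 - x.1| + |y.2 - x.2| ≤ t := by
  rw [singleton_add, image_add_left, mem_preimage, neg_add_eq_sub]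
  rcases ht.eq_or_lt with rfl | ht
  · rw [zero_smul_set ⟨0, by simp⟩, mem_zero, Prod.ext_iff, Prod.fst_sub, Prod.snd_sub,
      Prod.fst_zero, Prod.snd_zero, ← abs_eq_zero (a := y.1 - x.1), ← abs_eq_zero (a := y.2 - x.2),
      ← add_eq_zero_iff_of_nonneg (abs_nonneg _) (abs_nonneg _)]
    exact (add_nonneg (abs_nonneg _) (abs_nonneg _)).ge_iff_eq'.symm
  · rw [mem_smul_set_iff_inv_smul_mem₀ ht.ne', mem_ofPred_eq]
    simp only [Prod.smul_fst, Prod.smul_snd, Prod.fst_sub, Prod.snd_sub, smul_eq_mul, abs_mul,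
      abs_inv, abs_of_pos ht, ← mul_add, inv_mul_le_iff₀ ht, mul_one]

theorem minTime_diamond_box {a b r : ℝ} (hr : 0 ≤ r) (x : ℝ × ℝ) :
    minTime {p : ℝ × ℝ | |p.1| + |p.2| ≤ 1} (Icc (a - r) (a + r) ×ˢ Icc (b - r) (b + r)) x =
      intervalDist a r x.1 + intervalDist b r x.2 := by
  suffices h : {t : ℝ | 0 ≤ t ∧ ((Icc (a - r) (a + r) ×ˢ Icc (b - r) (b + r)) ∩
      ({x} + t • {p : ℝ × ℝ | |p.1| + |p.2| ≤ 1})).Nonempty} =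
      Ici (intervalDist a r x.1 + intervalDist b r x.2) by
    rw [minTime, h, csInf_Ici]
  ext t
  rw [mem_Ici]
  constructor
  · rintro ⟨ht, q, ⟨hq₁, hq₂⟩, hqx⟩
    rw [mem_singleton_add_smul_diamond ht] at hqx
    linarith [intervalDist_le_abs_sub (s := x.1) hq₁, intervalDist_le_abs_sub (s := x.2) hq₂]
  · intro ht
    obtain ⟨q₁, hq₁, hd₁⟩ := exists_mem_Icc_abs_sub_eq_intervalDist (c := a) hr x.1
    obtain ⟨q₂, hq₂, hd₂⟩ := exists_mem_Icc_abs_sub_eq_intervalDist (c := b) hr x.2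
    have ht₀ : 0 ≤ t :=
      (add_nonneg (intervalDist_nonneg _ _ _) (intervalDist_nonneg _ _ _)).trans ht
    refine ⟨ht₀, (q₁, q₂), ⟨hq₁, hq₂⟩, (mem_singleton_add_smul_diamond ht₀).mpr ?_⟩
    rwa [hd₁, hd₂]

/-- Subgradients of the minimal time function generated by the closed unit diamond
dynamics `F = {(x₁,x₂) : |x₁| + |x₂| ≤ 1}` and a square target
`Ω = [a−r,a+r] × [b−r,b+r]` in `ℝ²`: the explicitly given case-defined vector is a
subgradient of `T^F_Ω` at every point. -/
theorem minTime_diamond_square_subgradient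
    (a b r : ℝ) (hr : 0 < r)
    (F : Set (ℝ × ℝ)) (hF : F = {p : ℝ × ℝ | |p.1| + |p.2| ≤ 1})
    (Ω : Set (ℝ × ℝ)) (hΩ : Ω = Set.Icc (a - r) (a + r) ×ˢ Set.Icc (b - r) (b + r))
    (T : ℝ × ℝ → ℝ) (hT : T = minTime F Ω)
    (xbar : ℝ × ℝ) :
    (|xbar.2 - b| ≤ r → xbar.1 > a + r → IsSubgradAt T xbar (1, 0)) ∧
    (|xbar.2 - b| ≤ r → xbar.1 < a - r → IsSubgradAt T xbar (-1, 0)) ∧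
    (|xbar.1 - a| ≤ r → xbar.2 > b + r → IsSubgradAt T xbar (0, 1)) ∧
    (|xbar.1 - a| ≤ r → xbar.2 < b - r → IsSubgradAt T xbar (0, -1)) ∧
    (xbar.1 > a + r → xbar.2 > b + r → IsSubgradAt T xbar (1, 1)) ∧
    (xbar.1 < a - r → xbar.2 > b + r → IsSubgradAt T xbar (-1, 1)) ∧
    (xbar.1 < a - r → xbar.2 < b - r → IsSubgradAt T xbar (-1, -1)) ∧
    (xbar.1 > a + r → xbar.2 < b - r → IsSubgradAt T xbar (1, -1)) ∧
    (xbar ∈ Ω → IsSubgradAt T xbar (0, 0)) := by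
  obtain rfl : T = fun x ↦ intervalDist a r x.1 + intervalDist b r x.2 := by
    subst hT hF hΩ
    exact funext (minTime_diamond_box hr.le)
  have right {c s} (h : c + r < s) := intervalDist_isSubderivAt_one hr.le h
  have left {c s} (h : s < c - r) := intervalDist_isSubderivAt_neg_one hr.le h
  have mid {c s} (h : |s - c| ≤ r) := intervalDist_isSubderivAt_zero h
  refine ⟨fun h₂ h₁ ↦ (right h₁).isSubgradAt_add (mid h₂),
    fun h₂ h₁ ↦ (left h₁).isSubgradAt_add (mid h₂),
    fun h₁ h₂ ↦ (mid h₁).isSubgradAt_add (right h₂),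
    fun h₁ h₂ ↦ (mid h₁).isSubgradAt_add (left h₂),
    fun h₁ h₂ ↦ (right h₁).isSubgradAt_add (right h₂),
    fun h₁ h₂ ↦ (left h₁).isSubgradAt_add (right h₂),
    fun h₁ h₂ ↦ (left h₁).isSubgradAt_add (left h₂),
    fun h₁ h₂ ↦ (right h₁).isSubgradAt_add (left h₂), fun hx ↦ ?_⟩
  rw [hΩ] at hx
  exact (mid ((abs_sub_comm _ _).trans_le (mem_Icc_iff_abs_le.mpr hx.1))).isSubgradAt_add
    (mid ((abs_sub_comm _ _).trans_le (mem_Icc_iff_abs_le.mpr hx.2)))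
end

section
/- In ℝ², let F := [−1,1] × [−1,1] and let Ω := [a−r, a+r] × [b−r, b+r] be the square centered at (a,b) with short radius r > 0. Let T(x) := T^F_Ω(x) be the associated (convex) minimal time function. Then the vector v(x̄₁,x̄₂) defined by the following cases is a subgradient of T at (x̄₁,x̄₂), i.e., v(x̄₁,x̄₂) ∈ ∂T(x̄₁,x̄₂): v = (1,0) if |x̄₂−b| ≤ x̄₁−a and x̄₁ > a+r; v = (−1,0) if |x̄₂−b| ≤ a−x̄₁ and x̄₁ < a−r; v = (0,1) if |x̄₁−a| ≤ x̄₂−b and x̄₂ > b+r; v = (0,−1) if |x̄₁−a| ≤ b−x̄₂ and x̄₂ < b−r; v = (0,0) if (x̄₁,x̄₂) ∈ Ω. -/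
open Set Metric Pointwise

/-!
`F` is the closed unit ball of the sup norm on `ℝ²` and `Ω` is the closed sup-norm ball of
radius `r` about `(a, b)`, so `T x = max 0 (‖x - (a, b)‖∞ - r)`. Thus `T` is the maximum of the
five affine functions `0` and `±(xᵢ - cᵢ) - r`; each case of the theorem names one that is active
at `xbar`, and the slope of an affine minorant touching `T` at `xbar` is a subgradient there.
-/

lemma inter_singleton_add_nonempty_iff {E : Type*} [AddCommGroup E] {Q S : Set E} {x : E} :
    (Q ∩ ({x} + S)).Nonempty ↔ x ∈ Q - S := by
  simp only [singleton_add, Set.Nonempty, mem_inter_iff, mem_image, mem_sub]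
  constructor
  · rintro ⟨_, hq, s, hs, rfl⟩
    exact ⟨x + s, hq, s, hs, add_sub_cancel_right x s⟩
  · rintro ⟨q, hq, s, hs, rfl⟩
    exact ⟨q, hq, s, hs, sub_add_cancel q s⟩

theorem minTime_closedBall_closedBall {E : Type*} [NormedAddCommGroup E] [NormedSpace ℝ E]
    [ProperSpace E] {c : E} {r : ℝ} (hr : 0 ≤ r) (x : E) :
    minTime (closedBall 0 1) (closedBall c r) x = max 0 (dist x c - r) := by
  have hset : {t : ℝ | 0 ≤ t ∧ (closedBall c r ∩ ({x} + t • closedBall (0 : E) 1)).Nonempty} =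
      Ici (max 0 (dist x c - r)) := by
    ext t
    simp only [mem_ofPred_eq, mem_Ici, max_le_iff, inter_singleton_add_nonempty_iff,
      smul_unitClosedBall]
    refine and_congr_right fun ht => ?_
    rw [Real.norm_of_nonneg ht, closedBall_sub_closedBall hr ht, sub_zero, mem_closedBall,
      sub_le_iff_le_add']
  rw [minTime, hset, csInf_Ici]

lemma Icc_prod_Icc_eq_closedBall (a b r : ℝ) :
    Icc (a - r) (a + r) ×ˢ Icc (b - r) (b + r) = closedBall (a, b) r := by
  rw [← closedBall_prod_same, Real.closedBall_eq_Icc, Real.closedBall_eq_Icc]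

theorem minTime_unitSquare_square {a b r : ℝ} (hr : 0 ≤ r) (x : ℝ × ℝ) :
    minTime (Icc (-1) 1 ×ˢ Icc (-1) 1) (Icc (a - r) (a + r) ×ˢ Icc (b - r) (b + r)) x =
      max 0 (max |x.1 - a| |x.2 - b| - r) := by
  have hunit : Icc (-1 : ℝ) 1 ×ˢ Icc (-1 : ℝ) 1 = closedBall 0 1 := by
    simpa [← Prod.zero_eq_mk] using Icc_prod_Icc_eq_closedBall 0 0 1
  rw [hunit, Icc_prod_Icc_eq_closedBall, minTime_closedBall_closedBall hr, Prod.dist_eq,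
    Real.dist_eq, Real.dist_eq]

lemma isSubgradAt_of_affine_minorant {φ : ℝ × ℝ → ℝ} {xbar v : ℝ × ℝ} (c : ℝ)
    (hle : ∀ x, v.1 * x.1 + v.2 * x.2 + c ≤ φ x)
    (heq : φ xbar = v.1 * xbar.1 + v.2 * xbar.2 + c) : IsSubgradAt φ xbar v :=
  fun x => by linarith [hle x]

/-- Subgradients of the minimal time function generated by the square dynamics
`F = [−1,1] × [−1,1]` and a square target `Ω = [a−r,a+r] × [b−r,b+r]` in `ℝ²`:
the explicitly given case-defined vector is a subgradient of `T^F_Ω`. -/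
theorem minTime_square_square_subgradient
    (a b r : ℝ) (hr : 0 < r)
    (F : Set (ℝ × ℝ)) (hF : F = Set.Icc (-1 : ℝ) 1 ×ˢ Set.Icc (-1 : ℝ) 1)
    (Ω : Set (ℝ × ℝ)) (hΩ : Ω = Set.Icc (a - r) (a + r) ×ˢ Set.Icc (b - r) (b + r))
    (T : ℝ × ℝ → ℝ) (hT : T = minTime F Ω)
    (xbar : ℝ × ℝ) :
    (|xbar.2 - b| ≤ xbar.1 - a → xbar.1 > a + r → IsSubgradAt T xbar (1, 0)) ∧
    (|xbar.2 - b| ≤ a - xbar.1 → xbar.1 < a - r → IsSubgradAt T xbar (-1, 0)) ∧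
    (|xbar.1 - a| ≤ xbar.2 - b → xbar.2 > b + r → IsSubgradAt T xbar (0, 1)) ∧
    (|xbar.1 - a| ≤ b - xbar.2 → xbar.2 < b - r → IsSubgradAt T xbar (0, -1)) ∧
    (xbar ∈ Ω → IsSubgradAt T xbar (0, 0)) := by
  obtain rfl : T = fun x => max 0 (max |x.1 - a| |x.2 - b| - r) := by
    funext x; rw [hT, hF, hΩ, minTime_unitSquare_square hr.le]
  rw [hΩ, Icc_prod_Icc_eq_closedBall, mem_closedBall, Prod.dist_eq, Real.dist_eq, Real.dist_eq]
  refine ⟨fun h₁ h₂ => isSubgradAt_of_affine_minorant (-a - r) (fun x => ?_) ?_,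
    fun h₁ h₂ => isSubgradAt_of_affine_minorant (a - r) (fun x => ?_) ?_,
    fun h₁ h₂ => isSubgradAt_of_affine_minorant (-b - r) (fun x => ?_) ?_,
    fun h₁ h₂ => isSubgradAt_of_affine_minorant (b - r) (fun x => ?_) ?_,
    fun h => isSubgradAt_of_affine_minorant 0 (fun x => ?_) ?_⟩ <;>
  grind
end
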